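/- arXiv:1601.01824 — 4 statements merged into one kernel-verified Lean document; each statement's English description precedes it below -/
import Mathlib

section
/- If a c-edge-colored graph G with at least one vertex has no PC closed walk, then G has a G-monochromatic vertex. -/
open SimpleGraph

variable {V : Type*} {c : ℕ}

/-- The list of colors of the edges of a walk, in order. -/
def colorList (G : SimpleGraph V) (col : V → V → Fin c) {u v : V} (w : G.Walk u v) :
    List (Fin c) :=
  w.darts.map fun d => col d.toProd.1 d.toProd.2

/-- A walk is properly colored (as an open walk): consecutive edges have different colors. -/
def IsPCOpen (G : SimpleGraph V) (col : V → V → Fin c) {u v : V} (w : G.Walk u v) : Prop :=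
  (colorList G col w).Chain' (· ≠ ·)

/-- A closed walk is properly colored: consecutive edges have different colors,
including the last versus the first edge. -/
def IsPCClosed (G : SimpleGraph V) (col : V → V → Fin c) {u : V} (w : G.Walk u u) : Prop :=
  (colorList G col w ++ (colorList G col w).take 1).Chain' (· ≠ ·)

/-- `G` (with coloring `col`) has a properly colored cycle. -/
def HasPCCycle (G : SimpleGraph V) (col : V → V → Fin c) : Prop :=
  ∃ (u : V) (w : G.Walk u u), w.IsCycle ∧ IsPCClosed G col w

/-- `G` (with coloring `col`) has a properly colored closed trail. -/
def HasPCClosedTrail (G : SimpleGraph V) (col : V → V → Fin c) : Prop :=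
  ∃ (u : V) (w : G.Walk u u), w.IsCircuit ∧ IsPCClosed G col w

/-- `G` (with coloring `col`) has a properly colored closed walk. -/
def HasPCClosedWalk (G : SimpleGraph V) (col : V → V → Fin c) : Prop :=
  ∃ (u : V) (w : G.Walk u u), 0 < w.length ∧ IsPCClosed G col w

/-- A vertex all of whose incident edges have the same color. -/
def MonoVertex (G : SimpleGraph V) (col : V → V → Fin c) (z : V) : Prop :=
  ∀ v w, G.Adj z v → G.Adj z w → col z v = col z w

/-- An ordering (given by an injective ranking `r`) is of type 1 if every vertex sends
edges of only one color into each connected component of the subgraph induced by the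
later vertices. -/
def Ordering1 (G : SimpleGraph V) (col : V → V → Fin c) (r : V → ℕ) : Prop :=
  ∀ (u v w : V) (hv : G.Adj u v) (hw : G.Adj u w) (hrv : r u < r v) (hrw : r u < r w),
    (G.induce {x | r u < r x}).Reachable ⟨v, hrv⟩ ⟨w, hrw⟩ → col u v = col u w

/-- Type 2: all edges from a vertex to later vertices which are not bridges in the
subgraph induced by the vertex together with the later vertices have the same color. -/
def Ordering2 (G : SimpleGraph V) (col : V → V → Fin c) (r : V → ℕ) : Prop :=
  ∀ (u v w : V) (hv : G.Adj u v) (hw : G.Adj u w) (hrv : r u < r v) (hrw : r u < r w),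
    ¬ (G.induce {x | r u ≤ r x}).IsBridge s(⟨u, le_refl (r u)⟩, ⟨v, hrv.le⟩) →
    ¬ (G.induce {x | r u ≤ r x}).IsBridge s(⟨u, le_refl (r u)⟩, ⟨w, hrw.le⟩) →
    col u v = col u w

/-- Type 3: all edges from a vertex to later vertices have the same color. -/
def Ordering3 (G : SimpleGraph V) (col : V → V → Fin c) (r : V → ℕ) : Prop :=
  ∀ u v w : V, G.Adj u v → G.Adj u w → r u < r v → r u < r w → col u v = col u w

/-- Type 4: all edges to later vertices have the same color and all edges to earlier
vertices have the same color. -/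
def Ordering4 (G : SimpleGraph V) (col : V → V → Fin c) (r : V → ℕ) : Prop :=
  Ordering3 G col r ∧
    ∀ u v w : V, G.Adj u v → G.Adj u w → r v < r u → r w < r u → col u v = col u w

/-- Type 5: type 4, and additionally the color towards earlier vertices differs from the
color towards later vertices. -/
def Ordering5 (G : SimpleGraph V) (col : V → V → Fin c) (r : V → ℕ) : Prop :=
  Ordering4 G col r ∧
    ∀ u v w : V, G.Adj u v → G.Adj u w → r v < r u → r u < r w → col u v ≠ col u w

def PCAcyclic1 (G : SimpleGraph V) (col : V → V → Fin c) : Prop :=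
  ∃ r : V → ℕ, Function.Injective r ∧ Ordering1 G col r

def PCAcyclic2 (G : SimpleGraph V) (col : V → V → Fin c) : Prop :=
  ∃ r : V → ℕ, Function.Injective r ∧ Ordering2 G col r

def PCAcyclic3 (G : SimpleGraph V) (col : V → V → Fin c) : Prop :=
  ∃ r : V → ℕ, Function.Injective r ∧ Ordering3 G col r

def PCAcyclic4 (G : SimpleGraph V) (col : V → V → Fin c) : Prop :=
  ∃ r : V → ℕ, Function.Injective r ∧ Ordering4 G col r

def PCAcyclic5 (G : SimpleGraph V) (col : V → V → Fin c) : Prop :=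
  ∃ r : V → ℕ, Function.Injective r ∧ Ordering5 G col r

/-- The number of `C`-monochromatic vertices of a closed walk `C`: vertices whose two
incident edges on `C` (cyclically) have the same color. -/
def monoCount (G : SimpleGraph V) (col : V → V → Fin c) {u : V} (w : G.Walk u u) : ℕ :=
  ((colorList G col w ++ (colorList G col w).take 1).zip
      (colorList G col w ++ (colorList G col w).take 1).tail).countP
    fun p => decide (p.1 = p.2)

/-- The number of vertices of a closed walk `C` that are not `C`-monochromatic. -/
def nonMonoCount (G : SimpleGraph V) (col : V → V → Fin c) {u : V} (w : G.Walk u u) : ℕ :=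
  ((colorList G col w ++ (colorList G col w).take 1).zip
      (colorList G col w ++ (colorList G col w).take 1).tail).countP
    fun p => decide (p.1 ≠ p.2)

/-!
If no vertex is monochromatic, every dart `(u, v)` can be continued by a dart `(v, w)` of a
different color. Choosing one continuation per dart gives a self-map of the finite set of darts,
and a periodic point of this map traces a closed walk in which any two consecutive edges,
the last and the first included, have different colors.
-/

namespace Function

theorem nonempty_periodicPts {α : Type*} [Finite α] [Nonempty α] (f : α → α) :
    (periodicPts f).Nonempty := by
  obtain ⟨m, n, hmn, hmn_eq⟩ :=
    Set.finite_univ.exists_lt_map_eq_of_forall_mem (f := fun n => f^[n] (Classical.arbitrary α))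
      fun _ => Set.mem_univ _
  refine ⟨f^[m] (Classical.arbitrary α), mk_mem_periodicPts (Nat.sub_pos_of_lt hmn) ?_⟩
  rw [IsPeriodicPt, IsFixedPt, ← iterate_add_apply, Nat.sub_add_cancel hmn.le]
  exact hmn_eq.symm

end Function

theorem List.isChain_iterate {α : Type*} {R : α → α → Prop} {f : α → α} (h : ∀ x, R x (f x))
    (a : α) (n : ℕ) : (List.iterate f a n).IsChain R := by
  induction n generalizing a with
  | zero => simp
  | succ n ih =>
    cases n with
    | zero => simp
    | succ n => exact List.IsChain.cons_cons (h a) (ih (f a))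

namespace SimpleGraph

variable {G : SimpleGraph V}

def iterateWalk (s : G.Dart → G.Dart) (hs : ∀ d, (s d).fst = d.snd) :
    (n : ℕ) → (d : G.Dart) → G.Walk d.fst (s^[n] d).fst
  | 0, _ => .nil
  | n + 1, d =>
    .cons d.adj ((iterateWalk s hs n (s d)).copy (hs d) (by rw [Function.iterate_succ_apply]))

theorem darts_iterateWalk (s : G.Dart → G.Dart) (hs : ∀ d, (s d).fst = d.snd) (n : ℕ)
    (d : G.Dart) : (iterateWalk s hs n d).darts = List.iterate s d n := by
  induction n generalizing d with
  | zero => rfl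
  | succ n ih => rw [iterateWalk, Walk.darts_cons, Walk.darts_copy, ih]; rfl

variable {col : V → V → Fin c}

theorem exists_adj_color_ne_of_not_monoVertex {z : V} (hz : ¬ MonoVertex G col z) (k : Fin c) :
    ∃ v, G.Adj z v ∧ col z v ≠ k := by
  obtain ⟨v, w, hv, hw, hvw⟩ : ∃ v w, G.Adj z v ∧ G.Adj z w ∧ col z v ≠ col z w := by
    simpa [MonoVertex] using hz
  by_cases hvk : col z v = k
  · exact ⟨w, hw, hvk ▸ hvw.symm⟩
  · exact ⟨v, hv, hvk⟩

theorem hasPCClosedWalk_of_dart_succ [Finite V] [Nonempty G.Dart] (s : G.Dart → G.Dart)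
    (hs : ∀ d, (s d).fst = d.snd) (hcol : ∀ d, col (s d).fst (s d).snd ≠ col d.fst d.snd) :
    HasPCClosedWalk G col := by
  have : Finite G.Dart := .of_injective _ Dart.toProd_injective
  obtain ⟨d, n, hn, hd⟩ := Function.nonempty_periodicPts s
  refine ⟨d.fst, (iterateWalk s hs n d).copy rfl (congrArg (·.fst) hd.eq), ?_, ?_⟩
  · rwa [Walk.length_copy, ← Walk.length_darts, darts_iterateWalk, List.length_iterate]
  · have hclose : List.iterate s d n ++ (List.iterate s d n).take 1 = List.iterate s d (n + 1) := by
      rw [List.take_iterate, min_eq_left hn, List.iterate_add, hd]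
    rw [IsPCClosed, colorList, Walk.darts_copy, darts_iterateWalk, ← List.map_take,
      ← List.map_append, hclose]
    exact (List.isChain_map _).mpr (List.isChain_iterate (fun d => (hcol d).symm) d (n + 1))

end SimpleGraph

theorem no_pc_closed_walk_mono_vertex_general {V : Type*} [Fintype V] [Nonempty V] {c : ℕ}
    (G : SimpleGraph V) (col : V → V → Fin c)
    (hG : ¬ HasPCClosedWalk G col) :
    ∃ z : V, MonoVertex G col z := by
  by_contra! hmono
  have hsucc (d : G.Dart) :
      ∃ d' : G.Dart, d'.fst = d.snd ∧ col d'.fst d'.snd ≠ col d.fst d.snd := by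
    obtain ⟨v, hv, hne⟩ := exists_adj_color_ne_of_not_monoVertex (hmono d.snd) (col d.fst d.snd)
    exact ⟨⟨(d.snd, v), hv⟩, rfl, hne⟩
  choose s hs hcol using hsucc
  obtain ⟨z⟩ := ‹Nonempty V›
  obtain ⟨v, -, hv, -⟩ : ∃ v w, G.Adj z v ∧ G.Adj z w ∧ col z v ≠ col z w := by
    simpa [MonoVertex] using hmono z
  have : Nonempty G.Dart := ⟨⟨(z, v), hv⟩⟩
  exact hG (hasPCClosedWalk_of_dart_succ s hs hcol)

/-- If a `c`-edge-colored graph `G` with at least one vertex has no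
PC closed walk, then `G` has a `G`-monochromatic vertex. -/
theorem no_pc_closed_walk_mono_vertex {V : Type*} [Fintype V] [Nonempty V] {c : ℕ}
    (G : SimpleGraph V) (col : V → V → Fin c) (hsym : ∀ u v, col u v = col v u)
    (hG : ¬ HasPCClosedWalk G col) :
    ∃ z : V, MonoVertex G col z :=
  no_pc_closed_walk_mono_vertex_general G col hG
end

section
/- A 2-edge-colored graph G is PC acyclic of type 5 if and only if G is bipartite and has no PC cycle. -/
open SimpleGraph

variable {V : Type*} {c : ℕ}

/-!
A proper 2-colouring `f` of `G` orients each edge `uv` from `u` to `v` when its colour is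
`f u`; with two colours and `f` proper, exactly one of the two directions qualifies. A properly
coloured walk that starts along this orientation must follow it throughout, and every directed
walk is properly coloured, so the PC cycles of `G` are exactly the directed cycles of the
orientation. An ordering of type 5 amounts to a colouring `f` (the colour towards later
vertices) whose orientation points from earlier to later vertices, i.e. a topological order of
the orientation, and one exists exactly when the orientation is acyclic.
-/

open Relation

lemma fin_two_eq_of_ne_of_ne {a b c : Fin 2} (ha : a ≠ c) (hb : b ≠ c) : a = b := by omega

lemma exists_injective_lt_of_irrefl_transGen {α : Type*} [Fintype α] {R : α → α → Prop}
    (hR : ∀ a, ¬ TransGen R a a) :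
    ∃ r : α → ℕ, Function.Injective r ∧ ∀ a b, R a b → r a < r b := by
  classical
  set N := Fintype.card α
  set e := Fintype.equivFin α
  set anc : α → ℕ := fun a => (Finset.univ.filter fun z => TransGen R z a).card
  have hanc : ∀ a b, R a b → anc a < anc b := by
    intro a b hab
    refine Finset.card_lt_card ((Finset.ssubset_iff_of_subset ?_).2 ⟨a, ?_, ?_⟩)
    · intro z
      simpa using fun hza => hza.tail hab
    · simpa using TransGen.single hab
    · simpa using hR a
  -- rank by the number of `R`-ancestors, breaking ties by an enumeration of `α`
  refine ⟨fun a => anc a * N + e a, ?_, ?_⟩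
  · intro a b hab
    have hmod := congrArg (· % N) hab
    simp only [Nat.mul_add_mod_self_right] at hmod
    rw [Nat.mod_eq_of_lt (e a).isLt, Nat.mod_eq_of_lt (e b).isLt] at hmod
    exact e.injective (Fin.ext hmod)
  · intro a b hab
    have h1 := hanc a b hab
    have h2 := (e a).isLt
    nlinarith

section Forward

variable {G : SimpleGraph V} {col : V → V → Fin c} {f : V → Fin c}

/-- The orientation of `G` induced by a vertex colouring `f`: the edge `uv` points from `u`
to `v` when its colour is `f u`. -/
def ForwardAdj (G : SimpleGraph V) (col : V → V → Fin c) (f : V → Fin c) (u v : V) : Prop :=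
  G.Adj u v ∧ col u v = f u

def SimpleGraph.Walk.IsForward (col : V → V → Fin c) (f : V → Fin c) {u v : V}
    (w : G.Walk u v) : Prop :=
  ∀ d ∈ w.darts, col d.fst d.snd = f d.fst

lemma colorList_reverse (hsym : ∀ u v, col u v = col v u) {u v : V} (w : G.Walk u v) :
    colorList G col w.reverse = (colorList G col w).reverse := by
  simp only [colorList, Walk.darts_reverse, List.map_reverse, List.map_map]
  congr 1
  exact List.map_congr_left fun d _ => (hsym _ _).symm

@[simp]
lemma colorList_cons {u v w : V} (h : G.Adj u v) (p : G.Walk v w) :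
    colorList G col (.cons h p) = col u v :: colorList G col p :=
  rfl

lemma SimpleGraph.Walk.IsForward.colorList_eq {u v : V} {w : G.Walk u v}
    (hw : w.IsForward col f) :
    colorList G col w = w.support.dropLast.map f := by
  rw [← w.map_fst_darts, List.map_map, colorList]
  exact List.map_congr_left hw

lemma SimpleGraph.Walk.IsForward.reflTransGen {u v : V} {w : G.Walk u v}
    (hw : w.IsForward col f) :
    ReflTransGen (ForwardAdj G col f) u v := by
  induction w with
  | nil => exact .refl
  | cons h p ih =>
    simp only [Walk.IsForward, Walk.darts_cons, List.forall_mem_cons] at hw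
    exact .head ⟨h, hw.1⟩ (ih hw.2)

lemma SimpleGraph.Walk.IsForward.transGen {u v : V} {w : G.Walk u v}
    (hw : w.IsForward col f) (hlen : w.length ≠ 0) : TransGen (ForwardAdj G col f) u v := by
  cases w with
  | nil => exact absurd rfl hlen
  | cons h p =>
    simp only [Walk.IsForward, Walk.darts_cons, List.forall_mem_cons] at hw
    exact .head' ⟨h, hw.1⟩ (show p.IsForward col f from hw.2).reflTransGen

lemma exists_isForward_of_reflTransGen {u v : V} (h : ReflTransGen (ForwardAdj G col f) u v) :
    ∃ w : G.Walk u v, w.IsForward col f := by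
  induction h using ReflTransGen.head_induction_on with
  | refl => exact ⟨.nil, by simp [Walk.IsForward]⟩
  | head hux _ ih =>
    obtain ⟨w, hw⟩ := ih
    exact ⟨.cons hux.1 w, by simpa [Walk.IsForward] using ⟨hux.2, hw⟩⟩

/-- On a forward closed walk the colour sequence, closed up cyclically, is `f` along the
support, so it is properly coloured because `f` is. -/
lemma SimpleGraph.Walk.IsForward.isPCClosed (hf : ∀ u v, G.Adj u v → f u ≠ f v) {u : V}
    {w : G.Walk u u} (hw : w.IsForward col f) : IsPCClosed G col w := by
  cases w with
  | nil => exact List.isChain_nil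
  | cons h p =>
    have hcolors : colorList G col (.cons h p) ++ (colorList G col (.cons h p)).take 1 =
        (Walk.cons h p).support.map f := by
      rw [hw.colorList_eq, Walk.support_cons, List.dropLast_cons_of_ne_nil p.support_ne_nil]
      conv_rhs => rw [← List.dropLast_append_getLast p.support_ne_nil, p.getLast_support]
      simp only [List.map_cons, List.map_append, List.cons_append, List.take_succ_cons,
        List.take_zero, List.map_nil]
    rw [IsPCClosed, hcolors]
    exact List.isChain_map_of_isChain f hf (Walk.cons h p).isChain_adj_support

end Forward

section TwoColours

variable {G : SimpleGraph V} {col : V → V → Fin 2} {f : V → Fin 2}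

/-- In two colours, once a properly coloured walk leaves a vertex in the colour `f`
prescribes, it is forced to do so at every later vertex. -/
lemma IsPCOpen.isForward (hf : ∀ u v, G.Adj u v → f u ≠ f v) {u v : V} {w : G.Walk u v}
    (hpc : IsPCOpen G col w) (hhead : ∀ x ∈ (colorList G col w).head?, x = f u) :
    w.IsForward col f := by
  induction w with
  | nil => simp [Walk.IsForward]
  | @cons a x b h p ih =>
    obtain ⟨hhd, htl⟩ := List.isChain_cons.1 hpc
    simp only [colorList_cons, List.head?_cons, Option.mem_def, Option.some.injEq,
      forall_eq'] at hhead
    simp only [Walk.IsForward, Walk.darts_cons, List.forall_mem_cons]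
    refine ⟨hhead, ih htl fun y hy => fin_two_eq_of_ne_of_ne ?_ (hf a x h).symm⟩
    exact hhead ▸ (hhd y hy).symm

lemma hasPCCycle_iff_exists_transGen_forwardAdj (hsym : ∀ u v, col u v = col v u)
    (hf : ∀ u v, G.Adj u v → f u ≠ f v) :
    HasPCCycle G col ↔ ∃ a, TransGen (ForwardAdj G col f) a a := by
  constructor
  · rintro ⟨u, w, hcyc, hpc⟩
    have hlen : w.length ≠ 0 := by have := hcyc.three_le_length; omega
    obtain ⟨hopen, -, hclose⟩ := List.isChain_append.1 hpc
    by_cases hfirst : ∀ x ∈ (colorList G col w).head?, x = f u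
    · exact ⟨u, (IsPCOpen.isForward hf hopen hfirst).transGen hlen⟩
    -- otherwise the walk leaves `u` against `f`, so it comes back along `f`: reverse it
    push Not at hfirst
    obtain ⟨y, hy, hyu⟩ := hfirst
    have hrev : IsPCOpen G col w.reverse := by
      rw [IsPCOpen, colorList_reverse hsym]
      exact List.isChain_reverse.2 (hopen.imp fun _ _ h => h.symm)
    refine ⟨u, (hrev.isForward hf fun x hx => ?_).transGen (by simpa using hlen)⟩
    rw [colorList_reverse hsym, List.head?_reverse] at hx
    exact fin_two_eq_of_ne_of_ne (hclose x hx y (by simpa [List.head?_take] using hy)) hyu.symm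
  · classical
    rintro ⟨a, ha⟩
    obtain ⟨x, ⟨hax, hcol⟩, hxa⟩ := TransGen.head'_iff.1 ha
    obtain ⟨p, hp⟩ := exists_isForward_of_reflTransGen hxa
    have hb : p.bypass.IsForward col f := fun d hd => hp d (p.darts_bypass_subset_darts hd)
    have hfwd : (Walk.cons hax p.bypass).IsForward col f := by
      simpa [Walk.IsForward] using ⟨hcol, hb⟩
    refine ⟨a, _, (Walk.cons_isCycle_iff _ _).2 ⟨p.bypass_isPath, fun he => ?_⟩,
      hfwd.isPCClosed hf⟩
    -- a path from `x` to `a` through the edge `xa` is that edge, which would be oriented both ways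
    rw [p.bypass_isPath.eq_adj_toWalk_of_mem_edges (Sym2.eq_swap ▸ he)] at hb
    have hxa : col x a = f x := hb ⟨(x, a), hax.symm⟩ (by simp)
    exact hf a x hax (by rw [← hcol, hsym, hxa])

lemma ordering5_iff_exists_color_iff_lt {r : V → ℕ} (hr : Function.Injective r) :
    Ordering5 G col r ↔
      ∃ f : V → Fin 2, ∀ u v, G.Adj u v → (col u v = f u ↔ r u < r v) := by
  constructor
  · rintro ⟨⟨hlater, hearlier⟩, hdiff⟩
    suffices ∀ u, ∃ a : Fin 2, ∀ v, G.Adj u v → (col u v = a ↔ r u < r v) by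
      choose f hf using this
      exact ⟨f, hf⟩
    intro u
    have hne : ∀ v, G.Adj u v → r v ≠ r u := fun v h => hr.ne h.ne.symm
    by_cases hl : ∃ w, G.Adj u w ∧ r u < r w
    · obtain ⟨w, huw, hw⟩ := hl
      refine ⟨col u w, fun v huv => ⟨fun he => ?_, fun hv => hlater u v w huv huw hv hw⟩⟩
      by_contra hv
      exact hdiff u v w huv huw (lt_of_le_of_ne (not_lt.1 hv) (hne v huv)) hw he
    push Not at hl
    have hlt : ∀ v, G.Adj u v → r v < r u := fun v h => lt_of_le_of_ne (hl v h) (hne v h)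
    by_cases he : ∃ w, G.Adj u w
    · obtain ⟨w, huw⟩ := he
      refine ⟨col u w + 1, fun v huv => iff_of_false ?_ (not_lt.2 (hlt v huv).le)⟩
      rw [hearlier u v w huv huw (hlt v huv) (hlt w huw)]
      omega
    · push Not at he
      exact ⟨0, fun v h => absurd h (he v)⟩
  · rintro ⟨f, hf⟩
    refine ⟨⟨fun u v w hv hw hrv hrw => ?_, fun u v w hv hw hrv hrw => ?_⟩,
      fun u v w hv hw hrv hrw => ?_⟩
    · rw [(hf u v hv).2 hrv, (hf u w hw).2 hrw]
    · exact fin_two_eq_of_ne_of_ne (fun h => lt_asymm hrv ((hf u v hv).1 h))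
        (fun h => lt_asymm hrw ((hf u w hw).1 h))
    · rw [(hf u w hw).2 hrw]
      exact fun h => lt_asymm hrv ((hf u v hv).1 h)

lemma ne_of_adj_of_color_iff_lt (hsym : ∀ u v, col u v = col v u) {r : V → ℕ}
    (hr : Function.Injective r) (hf : ∀ u v, G.Adj u v → (col u v = f u ↔ r u < r v))
    {u v : V} (h : G.Adj u v) : f u ≠ f v := by
  intro he
  have huv := hf u v h
  have hvu := hf v u h.symm
  rw [hsym v u, ← he] at hvu
  rcases lt_or_gt_of_ne (hr.ne h.ne) with hlt | hlt
  · exact lt_asymm hlt (hvu.1 (huv.2 hlt))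
  · exact lt_asymm hlt (huv.1 (hvu.2 hlt))

lemma color_eq_iff_lt_of_forwardAdj (hsym : ∀ u v, col u v = col v u)
    (hf : ∀ u v, G.Adj u v → f u ≠ f v) {r : V → ℕ}
    (hr : ∀ u v, ForwardAdj G col f u v → r u < r v) {u v : V} (h : G.Adj u v) :
    col u v = f u ↔ r u < r v := by
  refine ⟨fun he => hr u v ⟨h, he⟩, fun hlt => by_contra fun hne => ?_⟩
  refine lt_asymm hlt (hr v u ⟨h.symm, ?_⟩)
  rw [hsym]
  exact fin_two_eq_of_ne_of_ne hne (hf v u h.symm)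

end TwoColours

/-- A 2-edge-colored graph `G` is PC acyclic of type 5 if and only if
`G` is bipartite and has no PC cycle. -/
theorem pcAcyclic5_iff_bipartite_no_pc_cycle {V : Type*} [Fintype V]
    (G : SimpleGraph V) (col : V → V → Fin 2) (hsym : ∀ u v, col u v = col v u) :
    PCAcyclic5 G col ↔ G.Colorable 2 ∧ ¬ HasPCCycle G col := by
  constructor
  · rintro ⟨r, hr, h5⟩
    obtain ⟨f, hfr⟩ := (ordering5_iff_exists_color_iff_lt hr).1 h5
    have hf : ∀ u v, G.Adj u v → f u ≠ f v := fun _ _ => ne_of_adj_of_color_iff_lt hsym hr hfr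
    refine ⟨⟨Coloring.mk f fun h => hf _ _ h⟩, ?_⟩
    rw [hasPCCycle_iff_exists_transGen_forwardAdj hsym hf]
    rintro ⟨a, ha⟩
    have hlt : TransGen (· < ·) (r a) (r a) := ha.lift r fun u v huv => (hfr u v huv.1).1 huv.2
    exact lt_irrefl _ (transGen_eq_self (r := ((· < ·) : ℕ → ℕ → Prop)) ▸ hlt)
  · rintro ⟨⟨C⟩, hnc⟩
    have hf : ∀ u v, G.Adj u v → C u ≠ C v := fun _ _ h => C.valid h
    rw [hasPCCycle_iff_exists_transGen_forwardAdj hsym hf, not_exists] at hnc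
    obtain ⟨r, hr, hmono⟩ := exists_injective_lt_of_irrefl_transGen hnc
    exact ⟨r, hr, (ordering5_iff_exists_color_iff_lt hr).2
      ⟨C, fun _ _ => color_eq_iff_lt_of_forwardAdj hsym hf hmono⟩⟩
end

section
/- Let G be a c-edge-colored graph which is PC acyclic of type 4, and let x, y be distinct vertices of G. Then the minimum size of a set S ⊆ V(G) \ {x,y} such that G − S has no PC path between x and y equals the maximum number of internally vertex-disjoint PC paths between x and y in G. -/
open SimpleGraph

variable {V : Type*} {c : ℕ}

/-!
Under a type 4 ordering `r`, the two edges of a PC path at an inner vertex cannot both lead to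
earlier or both to later vertices, so PC paths are `r`-monotone; and an ascending path is PC exactly
when every inner vertex is a *transit* vertex, whose earlier and later neighbours are joined to it
in different colours. Hence, for `r x < r y` and `x`, `y` non-adjacent, the lists of inner vertices
of PC `x`–`y` paths are the `A`–`B` walks in the digraph of ascending edges into transit vertices,
with `A` the transit neighbours of `x` above `x` and `B` the neighbours of `y` below `y`, and the
theorem is Menger's theorem for this digraph. (If `x` and `y` are adjacent, no set avoiding them
destroys the PC path `xy`; if `r y < r x`, reverse the ordering.)

Menger's theorem is proved by induction on the number of arcs: if deleting an arc `uv` leaves a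
separator `S` with `|S| < k`, then `S + u` and `S + v` are separators of size `k`, and the smaller
digraph links `A` onto `S + u` and `S + v` onto `B`; these walks meet only in `S`, so they glue
along `S` and the arc `uv`.
-/

open Finset

theorem List.IsChain.and {α : Type*} {R S : α → α → Prop} {l : List α} (hR : l.IsChain R)
    (hS : l.IsChain S) : l.IsChain fun a b => R a b ∧ S a b := by
  induction hR with
  | nil => exact .nil
  | singleton a => exact .singleton a
  | cons_cons hr _ ih => exact .cons_cons ⟨hr, hS.rel⟩ (ih hS.of_cons)

theorem List.IsChain.imp_of_mem_dropLast_imp {α : Type*} {R S : α → α → Prop} {l : List α}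
    (H : ∀ a b, a ∈ l.dropLast → R a b → S a b) (h : l.IsChain R) : l.IsChain S := by
  induction h with
  | nil => exact .nil
  | singleton a => exact .singleton a
  | cons_cons hr _ ih =>
    refine .cons_cons (H _ _ (by simp) hr) (ih fun a b ha => H a b ?_)
    rw [List.dropLast_cons_cons]
    exact List.mem_cons_of_mem _ ha

theorem List.exists_eq_append_cons_first {α : Type*} {P : α → Prop} {l : List α}
    (h : ∃ a ∈ l, P a) : ∃ l₁ a l₂, l = l₁ ++ a :: l₂ ∧ P a ∧ ∀ b ∈ l₁, ¬ P b := by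
  classical
  obtain ⟨a, ha⟩ := Option.isSome_iff_exists.mp
    (List.find?_isSome (p := fun a => decide (P a)).mpr (by simpa using h))
  obtain ⟨hPa, l₁, l₂, hl, hl₁⟩ := List.find?_eq_some_iff_append.mp ha
  exact ⟨l₁, a, l₂, hl, by simpa using hPa, fun b hb => by simpa using hl₁ b hb⟩

namespace Menger

variable {R R' : V → V → Prop} {A B : Set V} {S T : Finset V} {k : ℕ} {p l m : List V}
  {u v w x : V}

structure IsABWalk (R : V → V → Prop) (A B : Set V) (p : List V) : Prop where
  ne_nil : p ≠ []
  isChain : p.IsChain R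
  head_mem : ∀ a ∈ p.head?, a ∈ A
  getLast_mem : ∀ b ∈ p.getLast?, b ∈ B

def Separates (R : V → V → Prop) (A B : Set V) (S : Finset V) : Prop :=
  ∀ p, IsABWalk R A B p → ∃ s ∈ S, s ∈ p

def HasDisjointABWalks (R : V → V → Prop) (A B : Set V) (k : ℕ) : Prop :=
  ∃ f : Fin k → List V, (∀ i, IsABWalk R A B (f i)) ∧ Pairwise fun i j => (f i).Disjoint (f j)

lemma IsABWalk.mono (hR : ∀ a b, R' a b → R a b) (hp : IsABWalk R' A B p) :
    IsABWalk R A B p :=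
  { hp with isChain := hp.isChain.imp fun a b => hR a b }

lemma IsABWalk.reverse (hp : IsABWalk R A B p) : IsABWalk (flip R) B A p.reverse where
  ne_nil := by simpa using hp.ne_nil
  isChain := List.isChain_reverse.mpr hp.isChain
  head_mem := by simpa using hp.getLast_mem
  getLast_mem := by simpa using hp.head_mem

lemma IsABWalk.prefix {l' : List V} (hp : IsABWalk R A B (l ++ x :: l')) :
    IsABWalk R A {x} (l ++ [x]) where
  ne_nil := by simp
  isChain := hp.isChain.prefix ⟨l', by simp⟩
  head_mem := by simpa using hp.head_mem
  getLast_mem := by simp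

lemma IsABWalk.concat (hp : IsABWalk R A {u} (l ++ [u])) (huv : R u v) :
    IsABWalk R A {v} (l ++ [u] ++ [v]) where
  ne_nil := by simp
  isChain := hp.isChain.append (List.isChain_singleton v) (by simpa using huv)
  head_mem := by simpa using hp.head_mem
  getLast_mem := by simp

lemma IsABWalk.splice (hp : IsABWalk R A {x} (l ++ [x]))
    (hq : IsABWalk (flip R) B {x} (m ++ [x])) : IsABWalk R A B (l ++ x :: m.reverse) where
  ne_nil := by simp
  isChain := by
    have hq' : ([x] ++ m.reverse).IsChain R := by
      simpa using (List.isChain_reverse.mpr hq.isChain : (m ++ [x]).reverse.IsChain R)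
    simpa using hp.isChain.append_overlap hq' (by simp)
  head_mem := by simpa using hp.head_mem
  getLast_mem := by
    have : (l ++ x :: m.reverse).getLast? = (m ++ [x]).head? := by
      rw [show l ++ x :: m.reverse = l ++ (m ++ [x]).reverse by simp,
        List.getLast?_append_of_ne_nil _ (by simp), List.getLast?_reverse]
    exact this ▸ hq.head_mem

lemma Separates.flip (hS : Separates R A B S) : Separates (flip R) B A S := fun p hp => by
  simpa using hS p.reverse hp.reverse

lemma Separates.insert [DecidableEq V] (hS : Separates R' A B S)
    (hR : ∀ a b, R a b → R' a b ∨ a = w ∨ b = w) : Separates R A B (insert w S) := by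
  intro p hp
  by_cases hw : w ∈ p
  · exact ⟨w, mem_insert_self w S, hw⟩
  have hp' : IsABWalk R' A B p := { hp with
    isChain := hp.isChain.imp_of_mem_imp fun a b ha hb hab =>
      (hR a b hab).resolve_right (by rintro (rfl | rfl) <;> contradiction) }
  obtain ⟨s, hs, hsp⟩ := hS p hp'
  exact ⟨s, mem_insert_of_mem hs, hsp⟩

/-- Every `A`–`B` walk has an `A`–`T` prefix ending at its first vertex in `T`, and this prefix
uses no arc out of `w ∈ T`. -/
lemma Separates.trans (hS : Separates R' A T S) (hT : Separates R A B T) (hw : w ∈ T)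
    (hR : ∀ a b, R a b → a ≠ w → R' a b) : Separates R A B S := by
  intro p hp
  obtain ⟨l, x, l', rfl, hxT, hl⟩ := List.exists_eq_append_cons_first (P := (· ∈ T))
    (by obtain ⟨s, hs, hsp⟩ := hT p hp; exact ⟨s, hsp, hs⟩)
  have hq : IsABWalk R' A T (l ++ [x]) :=
    { hp.prefix with
      isChain := hp.prefix.isChain.imp_of_mem_dropLast_imp fun a b ha hab =>
        hR a b hab fun h => hl a (by simpa using ha) (h ▸ hw)
      getLast_mem := by simpa using hxT }
  obtain ⟨s, hs, hsq⟩ := hS _ hq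
  exact ⟨s, hs, by simp only [List.mem_append, List.mem_cons] at hsq ⊢; tauto⟩

lemma HasDisjointABWalks.flip (h : HasDisjointABWalks R A B k) :
    HasDisjointABWalks (flip R) B A k := by
  obtain ⟨f, hf, hdisj⟩ := h
  exact ⟨fun i => (f i).reverse, fun i => (hf i).reverse, fun i j hij => by
    simpa [List.disjoint_reverse_left, List.disjoint_reverse_right] using hdisj hij⟩

lemma hasDisjointABWalks_of_finset (T : Finset V) (C : V → List V)
    (hC : ∀ t ∈ T, IsABWalk R A B (C t))
    (hdisj : ∀ t ∈ T, ∀ t' ∈ T, t ≠ t' → (C t).Disjoint (C t')) :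
    HasDisjointABWalks R A B #T :=
  ⟨fun i => C (T.equivFin.symm i), fun i => hC _ (T.equivFin.symm i).2, fun i j hij =>
    hdisj _ (T.equivFin.symm i).2 _ (T.equivFin.symm j).2
      fun h => hij (T.equivFin.symm.injective (Subtype.ext h))⟩

lemma hasDisjointABWalks_of_forall_not_rel [Fintype V] (hR : ∀ a b, ¬ R a b)
    (h : ∀ S, Separates R A B S → k ≤ #S) : HasDisjointABWalks R A B k := by
  classical
  have hsep : Separates R A B {a | a ∈ A ∧ a ∈ B} := by
    intro p hp
    obtain ⟨a, l, rfl⟩ := List.exists_cons_of_ne_nil hp.ne_nil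
    cases l with
    | nil => exact ⟨a, by simpa using ⟨hp.head_mem a rfl, hp.getLast_mem a rfl⟩, by simp⟩
    | cons b l => exact (hR a b hp.isChain.rel).elim
  obtain ⟨T, hTsub, rfl⟩ := exists_subset_card_eq (h _ hsep)
  refine hasDisjointABWalks_of_finset T (fun t => [t]) (fun t ht => ?_)
    fun _ _ _ _ h => by simpa [eq_comm] using h
  have := hTsub ht
  simp only [mem_filter, mem_univ, true_and] at this
  exact ⟨by simp, by simp, by simpa using this.1, by simpa using this.2⟩

structure IsLinkageOnto (R : V → V → Prop) (A : Set V) (T : Finset V) (body : V → List V) :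
    Prop where
  isABWalk : ∀ t ∈ T, IsABWalk R A {t} (body t ++ [t])
  notMem_body : ∀ t ∈ T, ∀ z ∈ body t, z ∉ T
  disjoint : ∀ t ∈ T, ∀ t' ∈ T, t ≠ t' → (body t ++ [t]).Disjoint (body t' ++ [t'])

lemma IsLinkageOnto.eq_of_mem {body : V → List V} (hL : IsLinkageOnto R A T body) {t z : V}
    (ht : t ∈ T) (hz : z ∈ body t ++ [t]) (hzT : z ∈ T) : z = t := by
  simp only [List.mem_append, List.mem_singleton] at hz
  exact hz.resolve_left fun h => hL.notMem_body t ht z h hzT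

/-- Cutting each walk at its first vertex in `T` gives a linkage, because `|T|` disjoint walks
have `|T|` distinct first vertices in `T`. -/
lemma HasDisjointABWalks.exists_isLinkageOnto (h : HasDisjointABWalks R A T #T) :
    ∃ body, IsLinkageOnto R A T body := by
  obtain ⟨f, hf, hdisj⟩ := h
  have hfirst i : ∃ l x l', f i = l ++ x :: l' ∧ x ∈ T ∧ ∀ z ∈ l, z ∉ T :=
    List.exists_eq_append_cons_first (P := (· ∈ T)) ⟨_, List.getLast_mem (hf i).ne_nil,
      (hf i).getLast_mem _ (List.getLast?_eq_some_getLast _)⟩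
  choose l x l' hfi hxT hl using hfirst
  have hsub i : l i ++ [x i] ⊆ f i := fun a ha => by
    rw [hfi i]; simp only [List.mem_append, List.mem_cons] at ha ⊢; tauto
  have hxf i : x i ∈ f i := hsub i (by simp)
  have hinj : Set.InjOn x Set.univ := fun i _ j _ hij => by
    by_contra hne
    exact hdisj hne (hxf i) (hij ▸ hxf j)
  have hsurj := surjOn_of_injOn_of_card_le x (s := univ) (fun i _ => hxT i)
    (by simpa using hinj) (by simp)
  choose! body hbody using fun t (ht : t ∈ T) =>
    (by obtain ⟨i, -, hi⟩ := hsurj ht; exact ⟨l i, i, hi, rfl⟩ : ∃ b, ∃ i, x i = t ∧ b = l i)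
  refine ⟨body, fun t ht => ?_, fun t ht => ?_, fun t ht t' ht' hne => ?_⟩
  · obtain ⟨i, rfl, hb⟩ := hbody t ht
    exact hb ▸ (hfi i ▸ hf i).prefix
  · obtain ⟨i, rfl, hb⟩ := hbody t ht
    exact hb ▸ hl i
  · obtain ⟨i, rfl, hb⟩ := hbody t ht
    obtain ⟨j, rfl, hb'⟩ := hbody t' ht'
    rw [hb, hb']
    exact fun a hai haj => hdisj (fun hij => hne (congrArg x hij)) (hsub i hai) (hsub j haj)

lemma IsLinkageOnto.eq_of_mem_of_mem {T' : Finset V} {P Q : V → List V}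
    (hP : IsLinkageOnto R A T P) (hQ : IsLinkageOnto (flip R) B T' Q) (hS : Separates R A B S)
    (hST : S ⊆ T) (hST' : S ⊆ T') {t t' z : V} (ht : t ∈ T) (ht' : t' ∈ T')
    (hzP : z ∈ P t ++ [t]) (hzQ : z ∈ Q t' ++ [t']) : z ∈ S ∧ z = t ∧ z = t' := by
  obtain ⟨l, l', hl⟩ := List.append_of_mem hzP
  obtain ⟨m, m', hm⟩ := List.append_of_mem hzQ
  have hlP : l ⊆ P t := by
    have := congrArg List.dropLast hl
    rw [List.dropLast_concat, List.dropLast_append_cons] at this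
    exact this ▸ List.subset_append_left _ _
  have hmQ : m ⊆ Q t' := by
    have := congrArg List.dropLast hm
    rw [List.dropLast_concat, List.dropLast_append_cons] at this
    exact this ▸ List.subset_append_left _ _
  obtain ⟨s, hs, hsW⟩ := hS _ <|
    (hl ▸ hP.isABWalk t ht).prefix.splice (hm ▸ hQ.isABWalk t' ht').prefix
  simp only [List.mem_append, List.mem_cons, List.mem_reverse] at hsW
  rcases hsW with hsl | rfl | hsm
  · exact absurd (hST hs) (hP.notMem_body t ht s (hlP hsl))
  · exact ⟨hs, hP.eq_of_mem ht hzP (hST hs), hQ.eq_of_mem ht' hzQ (hST' hs)⟩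
  · exact absurd (hST' hs) (hQ.notMem_body t' ht' s (hmQ hsm))

lemma hasDisjointABWalks_of_isLinkageOnto [DecidableEq V] {P Q : V → List V}
    (hR' : ∀ a b, R' a b → R a b) (huv : R u v) (hu : u ∉ S) (hv : v ∉ S)
    (hS : Separates R' A B S) (hP : IsLinkageOnto R' A (insert u S) P)
    (hQ : IsLinkageOnto (flip R') B (insert v S) Q) : HasDisjointABWalks R A B (#S + 1) := by
  -- the walk into `u` continues along `uv`, the walk into `t ∈ S` continues out of `t`
  set φ : V → V := fun t => if t = u then v else t
  have hφ : ∀ t ∈ insert u S, φ t ∈ insert v S := fun t ht => by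
    by_cases htu : t = u <;> simp_all [φ]
  have hφS : ∀ t, φ t ∈ S → φ t = t := fun t h => by
    by_cases htu : t = u <;> simp_all [φ]
  have hφinj : ∀ t ∈ insert u S, ∀ t' ∈ insert u S, φ t = φ t' → t = t' :=
    fun t ht t' ht' h => by by_cases htu : t = u <;> by_cases ht'u : t' = u <;> simp_all [φ]
  set C : V → List V := fun t =>
    (if t = u then P u ++ [u] else P t) ++ φ t :: (Q (φ t)).reverse
  have hC : ∀ t ∈ insert u S, IsABWalk R A B (C t) := fun t ht => by
    have hQt : IsABWalk (flip R) B {φ t} (Q (φ t) ++ [φ t]) :=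
      (hQ.isABWalk _ (hφ t ht)).mono fun a b h => hR' b a h
    by_cases htu : t = u
    · subst htu
      simpa [C, φ] using ((hP.isABWalk t ht).mono hR').concat huv |>.splice (by simpa [φ] using hQt)
    · simpa [C, φ, htu] using ((hP.isABWalk t ht).mono hR').splice (by simpa [φ, htu] using hQt)
  have hmemC : ∀ t, ∀ z ∈ C t, z ∈ P t ++ [t] ∨ z ∈ Q (φ t) ++ [φ t] := fun t z hz => by
    by_cases htu : t = u <;>
      simp only [C, φ, htu, if_true, if_false, List.mem_append, List.mem_cons,
        List.mem_reverse] at hz ⊢ <;> tauto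
  have hcross : ∀ t ∈ insert u S, ∀ t' ∈ insert u S, ∀ z ∈ P t ++ [t],
      z ∈ Q (φ t') ++ [φ t'] → t = t' := fun t ht t' ht' z hzP hzQ => by
    obtain ⟨hzS, rfl, h⟩ := hP.eq_of_mem_of_mem hQ hS (subset_insert u S) (subset_insert v S) ht
      (hφ t' ht') hzP hzQ
    rw [h, hφS t' (h ▸ hzS)]
  rw [← card_insert_of_notMem hu]
  refine hasDisjointABWalks_of_finset _ C hC fun t ht t' ht' hne z hz hz' => ?_
  rcases hmemC t z hz with hzP | hzQ <;> rcases hmemC t' z hz' with hzP' | hzQ'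
  · exact hP.disjoint t ht t' ht' hne hzP hzP'
  · exact hne (hcross t ht t' ht' z hzP hzQ')
  · exact hne (hcross t' ht' t ht z hzP' hzQ).symm
  · exact hQ.disjoint _ (hφ t ht) _ (hφ t' ht') (fun h => hne (hφinj t ht t' ht' h)) hzQ hzQ'

lemma hasDisjointABWalks_of_insert_arc [DecidableEq V]
    (hR : ∀ a b, R a b ↔ R' a b ∨ a = u ∧ b = v)
    (ih : ∀ A B k, (∀ S, Separates R' A B S → k ≤ #S) → HasDisjointABWalks R' A B k)
    (h : ∀ S, Separates R A B S → k ≤ #S) : HasDisjointABWalks R A B k := by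
  by_cases h' : ∀ S, Separates R' A B S → k ≤ #S
  · obtain ⟨f, hf, hdisj⟩ := ih A B k h'
    exact ⟨f, fun i => (hf i).mono fun a b hab => (hR a b).2 (Or.inl hab), hdisj⟩
  push Not at h'
  obtain ⟨S, hS, hSk⟩ := h'
  have hSu : Separates R A B (insert u S) := hS.insert fun a b hab => by
    rcases (hR a b).1 hab with h | ⟨rfl, -⟩ <;> simp [*]
  have hSv : Separates R A B (insert v S) := hS.insert fun a b hab => by
    rcases (hR a b).1 hab with h | ⟨-, rfl⟩ <;> simp [*]
  have hu : u ∉ S := fun hu => by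
    have := h _ hSu; rw [insert_eq_of_mem hu] at this; omega
  have hv : v ∉ S := fun hv => by
    have := h _ hSv; rw [insert_eq_of_mem hv] at this; omega
  obtain rfl : k = #S + 1 := by
    have := h _ hSu; rw [card_insert_of_notMem hu] at this; omega
  have hP := ih A ↑(insert u S) _ fun T hT =>
    h T (hT.trans hSu (mem_insert_self u S) fun a b hab hau =>
      ((hR a b).1 hab).resolve_right fun h => hau h.1)
  have hQ := (ih ↑(insert v S) B _ fun T hT =>
    h T (hT.flip.trans hSv.flip (mem_insert_self v S) (fun a b hab hav =>
      ((hR b a).1 hab).resolve_right fun h => hav h.2)).flip).flip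
  rw [← card_insert_of_notMem hu] at hP
  rw [← card_insert_of_notMem hv] at hQ
  obtain ⟨P, hP⟩ := hP.exists_isLinkageOnto
  obtain ⟨Q, hQ⟩ := hQ.exists_isLinkageOnto
  exact hasDisjointABWalks_of_isLinkageOnto (fun a b hab => (hR a b).2 (Or.inl hab))
    ((hR u v).2 (Or.inr ⟨rfl, rfl⟩)) hu hv hS hP hQ

/-- **Menger's theorem** for finite digraphs. -/
theorem hasDisjointABWalks_of_forall_le_card [Finite V]
    (h : ∀ S, Separates R A B S → k ≤ #S) : HasDisjointABWalks R A B k := by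
  classical
  have := Fintype.ofFinite V
  obtain ⟨E, hE⟩ : ∃ E : Finset (V × V), ∀ a b, R a b ↔ (a, b) ∈ E :=
    ⟨univ.filter fun e => R e.1 e.2, by simp⟩
  induction E using Finset.induction_on generalizing R A B k with
  | empty => exact hasDisjointABWalks_of_forall_not_rel (by simpa using hE) h
  | insert e E he ih =>
    refine hasDisjointABWalks_of_insert_arc (R' := fun a b => (a, b) ∈ E) (u := e.1) (v := e.2)
      (fun a b => ?_) (fun A B k h => ih h fun _ _ => Iff.rfl) h
    rw [hE, mem_insert, Prod.ext_iff, or_comm]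

end Menger

lemma SimpleGraph.Walk.support_eq_cons_append {G : SimpleGraph V} {x y : V} (p : G.Walk x y)
    (hxy : x ≠ y) : p.support = x :: (p.support.tail.dropLast ++ [y]) := by
  cases p with
  | nil => exact absurd rfl hxy
  | cons h q =>
    have := List.dropLast_append_getLast q.support_ne_nil
    rw [q.getLast_support] at this
    rw [Walk.support_cons, List.tail_cons, this]

lemma SimpleGraph.Walk.exists_support_eq {G : SimpleGraph V} {x y : V} {l : List V}
    (h : (x :: (l ++ [y])).IsChain G.Adj) : ∃ p : G.Walk x y, p.support = x :: (l ++ [y]) :=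
  ⟨(Walk.ofSupport _ (List.cons_ne_nil _ _) h).copy (List.head_cons ..) (by simp),
    (Walk.support_copy ..).trans (Walk.support_ofSupport ..)⟩

lemma SimpleGraph.Walk.isPath_of_isChain_lt {G : SimpleGraph V} {x y : V} {r : V → ℕ}
    {p : G.Walk x y} (h : p.support.IsChain fun a b => r a < r b) : p.IsPath :=
  Walk.IsPath.mk'
    ((List.isChain_iff_pairwise.1 ((List.isChain_map r (R := (· < ·))).2 h)).nodup.of_map r)

lemma SimpleGraph.Walk.card_le_of_internallyDisjoint {G : SimpleGraph V} {x y : V} {k : ℕ}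
    (f : Fin k → G.Walk x y)
    (hf : ∀ i j, i ≠ j → ∀ v : V, v ∈ (f i).support → v ∈ (f j).support → v = x ∨ v = y)
    {S : Finset V} (hx : x ∉ S) (hy : y ∉ S) (hS : ∀ i, ∃ v ∈ S, v ∈ (f i).support) :
    k ≤ #S := by
  choose g hgS hgf using hS
  simpa using card_le_card_of_injOn g (s := univ) (fun i _ => hgS i) fun i _ j _ hij => by
    by_contra hne
    rcases hf i j hne (g i) (hgf i) (hij ▸ hgf j) with h | h
    exacts [hx (h ▸ hgS i), hy (h ▸ hgS i)]

section PCPaths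

variable {G : SimpleGraph V} {col : V → V → Fin c} {r : V → ℕ} {a b x y z : V}

lemma PCAcyclic4.exists_ordering4_lt [Fintype V] (h : PCAcyclic4 G col) (hxy : x ≠ y) :
    ∃ r, Function.Injective r ∧ Ordering4 G col r ∧ r x < r y := by
  obtain ⟨r, hinj, h3, h4⟩ := h
  rcases (hinj.ne hxy).lt_or_gt with hlt | hgt
  · exact ⟨r, hinj, ⟨h3, h4⟩, hlt⟩
  -- reversing the ordering swaps the two conditions of type 4
  have hle v : r v ≤ univ.sup r := le_sup (mem_univ v)
  have hlt {a b} : univ.sup r - r a < univ.sup r - r b ↔ r b < r a := by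
    have := hle a; have := hle b; omega
  refine ⟨fun v => univ.sup r - r v, fun a b hab => hinj ?_, ⟨fun u v w huv huw hv hw =>
    h4 u v w huv huw (hlt.1 hv) (hlt.1 hw), fun u v w huv huw hv hw =>
    h3 u v w huv huw (hlt.1 hv) (hlt.1 hw)⟩, hlt.2 hgt⟩
  have := hle a; have := hle b; dsimp only at hab; omega

def IsTransit (G : SimpleGraph V) (col : V → V → Fin c) (r : V → ℕ) (z : V) : Prop :=
  ∀ a b, G.Adj z a → G.Adj z b → r a < r z → r z < r b → col z a ≠ col z b

lemma isTransit_iff (hsym : ∀ u v, col u v = col v u) (hord : Ordering4 G col r)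
    (ha : G.Adj a z) (hb : G.Adj z b) (haz : r a < r z) (hzb : r z < r b) :
    IsTransit G col r z ↔ col a z ≠ col z b := by
  rw [hsym a z]
  refine ⟨fun h => h a b ha.symm hb haz hzb, fun h a' b' ha' hb' ha'z hzb' => ?_⟩
  rwa [hord.2 z a' a ha' ha.symm ha'z haz, hord.1 z b' b hb' hb hzb' hzb]

lemma colorList_eq_zipWith (p : G.Walk x y) :
    colorList G col p = List.zipWith col p.support p.support.tail := by
  induction p with
  | nil => rfl
  | cons h p ih =>
    rw [colorList, Walk.darts_cons, List.map_cons, ← colorList, ih, Walk.support_cons,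
      List.tail_cons, ← p.cons_tail_support]
    rfl

lemma isChain_lt_or_gt_of_isChain_ne (hsym : ∀ u v, col u v = col v u)
    (hinj : Function.Injective r) (hord : Ordering4 G col r) :
    ∀ {L : List V}, L.IsChain G.Adj → (List.zipWith col L L.tail).IsChain (· ≠ ·) →
      L.IsChain (fun a b => r a < r b) ∨ L.IsChain (fun a b => r b < r a)
  | [], _, _ => .inl .nil
  | [a], _, _ => .inl (.singleton a)
  | [a, b], hadj, _ => by
    simpa only [List.isChain_pair] using (hinj.ne hadj.rel.ne).lt_or_gt
  | a :: b :: c :: L, hadj, hpc => by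
    simp only [List.tail_cons, List.zipWith_cons_cons] at hpc
    have hne : col a b ≠ col b c := hpc.rel
    have hab := (hinj.ne hadj.rel.ne).lt_or_gt
    rcases isChain_lt_or_gt_of_isChain_ne hsym hinj hord hadj.of_cons
      (by simpa using hpc.of_cons) with hup | hdown
    · refine .inl (.cons_cons (hab.resolve_right fun hba => hne ?_) hup)
      rw [hsym, hord.1 b a c hadj.rel.symm hadj.of_cons.rel hba hup.rel]
    · refine .inr (.cons_cons (hab.resolve_left fun hab => hne ?_) hdown)
      rw [hsym, hord.2 b a c hadj.rel.symm hadj.of_cons.rel hab hdown.rel]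

lemma isChain_ne_iff_forall_isTransit (hsym : ∀ u v, col u v = col v u)
    (hord : Ordering4 G col r) :
    ∀ {L : List V}, L.IsChain G.Adj → L.IsChain (fun a b => r a < r b) →
      ((List.zipWith col L L.tail).IsChain (· ≠ ·) ↔ ∀ z ∈ L.tail.dropLast, IsTransit G col r z)
  | [], _, _ => by simp
  | [_], _, _ => by simp
  | [_, _], _, _ => by simp
  | a :: b :: c :: L, hadj, hup => by
    have ih := isChain_ne_iff_forall_isTransit hsym hord hadj.of_cons hup.of_cons
    simp only [List.tail_cons, List.zipWith_cons_cons, List.isChain_cons_cons,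
      List.dropLast_cons_cons, List.mem_cons, forall_eq_or_imp] at ih ⊢
    rw [ih, isTransit_iff hsym hord hadj.rel hadj.of_cons.rel hup.rel hup.of_cons.rel]

lemma isPCOpen_iff_of_lt (hsym : ∀ u v, col u v = col v u) (hinj : Function.Injective r)
    (hord : Ordering4 G col r) (hr : r x < r y) (p : G.Walk x y) :
    IsPCOpen G col p ↔ p.support.IsChain (fun a b => r a < r b) ∧
      ∀ z ∈ p.support.tail.dropLast, IsTransit G col r z := by
  change (colorList G col p).IsChain _ ↔ _
  rw [colorList_eq_zipWith]
  refine ⟨fun hpc => ?_, fun ⟨hup, ht⟩ =>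
    (isChain_ne_iff_forall_isTransit hsym hord p.isChain_adj_support hup).2 ht⟩
  have hup : p.support.IsChain (fun a b => r a < r b) := by
    refine (isChain_lt_or_gt_of_isChain_ne hsym hinj hord p.isChain_adj_support hpc).resolve_right
      fun hdown => ?_
    have hy : y ∈ p.support.tail :=
      (List.mem_cons.mp (p.cons_tail_support ▸ p.end_mem_support)).resolve_left
        fun h => hr.ne (h ▸ rfl)
    have := (List.isChain_map r (R := (· > ·))).2 hdown
    rw [← p.cons_tail_support, List.isChain_iff_pairwise, List.map_cons, List.pairwise_cons]
      at this
    exact hr.not_gt (this.1 _ (List.mem_map_of_mem hy))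
  exact ⟨hup, (isChain_ne_iff_forall_isTransit hsym hord p.isChain_adj_support hup).1 hpc⟩

def transitArc (G : SimpleGraph V) (col : V → V → Fin c) (r : V → ℕ) (a b : V) : Prop :=
  G.Adj a b ∧ r a < r b ∧ IsTransit G col r b

lemma isABWalk_transitArc_iff {l : List V} :
    Menger.IsABWalk (transitArc G col r) {a | transitArc G col r x a}
      {b | G.Adj b y ∧ r b < r y} l ↔
      l ≠ [] ∧ (x :: (l ++ [y])).IsChain (fun a b => G.Adj a b ∧ r a < r b) ∧
        ∀ z ∈ l, IsTransit G col r z := by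
  rw [List.isChain_cons, List.isChain_append]
  constructor
  · intro hl
    refine ⟨hl.ne_nil, ⟨fun a ha => ?_, hl.isChain.imp fun a b h => ⟨h.1, h.2.1⟩, .singleton y,
      fun b hb y' hy' => ?_⟩, hl.isChain.induction _ _ (fun a b h _ => h.2.2) fun hne => ?_⟩
    · rw [List.head?_append_of_ne_nil _ hl.ne_nil] at ha
      exact ⟨(hl.head_mem a ha).1, (hl.head_mem a ha).2.1⟩
    · obtain rfl : y = y' := by simpa using hy'
      exact hl.getLast_mem b hb
    · exact (hl.head_mem _ (List.head?_eq_some_head hne)).2.2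
  · rintro ⟨hne, ⟨hx, hch, -, hy⟩, ht⟩
    refine ⟨hne, hch.imp_of_mem_imp fun a b _ hb h => ⟨h.1, h.2, ht b hb⟩, fun a ha => ?_,
      fun b hb => hy b hb y rfl⟩
    have hx := hx a (by rw [List.head?_append_of_ne_nil _ hne]; exact ha)
    exact ⟨hx.1, hx.2, ht a (List.mem_of_head? ha)⟩

variable (hsym : ∀ u v, col u v = col v u) (hinj : Function.Injective r)
  (hord : Ordering4 G col r) (hr : r x < r y) (hnadj : ¬ G.Adj x y)
include hsym hinj hord hr hnadj

lemma isPCOpen_iff_isABWalk {p : G.Walk x y} {l : List V} (hp : p.support = x :: (l ++ [y])) :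
    IsPCOpen G col p ↔ Menger.IsABWalk (transitArc G col r) {a | transitArc G col r x a}
      {b | G.Adj b y ∧ r b < r y} l := by
  have hadj := p.isChain_adj_support
  rw [hp] at hadj
  rw [isPCOpen_iff_of_lt hsym hinj hord hr, isABWalk_transitArc_iff, hp, List.tail_cons,
    List.dropLast_concat]
  constructor
  · rintro ⟨hup, ht⟩
    refine ⟨?_, hadj.and hup, ht⟩
    rintro rfl
    exact hnadj hadj.rel
  · rintro ⟨-, hch, ht⟩
    exact ⟨hch.imp fun _ _ h => h.2, ht⟩

lemma exists_pcPath_of_isABWalk {l : List V}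
    (hl : Menger.IsABWalk (transitArc G col r) {a | transitArc G col r x a}
      {b | G.Adj b y ∧ r b < r y} l) :
    ∃ p : G.Walk x y, p.IsPath ∧ IsPCOpen G col p ∧ p.support = x :: (l ++ [y]) := by
  obtain ⟨p, hp⟩ := Walk.exists_support_eq
    ((isABWalk_transitArc_iff.1 hl).2.1.imp fun _ _ h => h.1)
  have hpc := (isPCOpen_iff_isABWalk hsym hinj hord hr hnadj hp).2 hl
  exact ⟨p, Walk.isPath_of_isChain_lt ((isPCOpen_iff_of_lt hsym hinj hord hr p).1 hpc).1, hpc, hp⟩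

lemma exists_mem_support_of_separates [DecidableEq V] {S : Finset V}
    (hS : Menger.Separates (transitArc G col r) {a | transitArc G col r x a}
      {b | G.Adj b y ∧ r b < r y} S)
    {p : G.Walk x y} (hpath : p.IsPath) (hpc : IsPCOpen G col p) :
    ∃ v ∈ S \ {x, y}, v ∈ p.support := by
  have hp := p.support_eq_cons_append (ne_of_apply_ne r hr.ne)
  obtain ⟨v, hvS, hv⟩ := hS _ ((isPCOpen_iff_isABWalk hsym hinj hord hr hnadj hp).1 hpc)
  have hnd := hpath.support_nodup
  rw [hp, List.nodup_cons, List.nodup_append] at hnd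
  refine ⟨v, mem_sdiff.2 ⟨hvS, ?_⟩, hp ▸ by simp [hv]⟩
  simp only [mem_insert, mem_singleton, not_or]
  exact ⟨fun h => hnd.1 (by simp [← h, hv]), fun h => hnd.2.2.2 v hv y (by simp) h⟩

theorem exists_internallyDisjoint_pcPaths [Finite V] {s : ℕ}
    (hcut : ∀ S : Finset V, x ∉ S → y ∉ S →
      (∀ p : G.Walk x y, p.IsPath → IsPCOpen G col p → ∃ v ∈ S, v ∈ p.support) → s ≤ S.card) :
    ∃ f : Fin s → G.Walk x y, Function.Injective f ∧
      (∀ i, (f i).IsPath ∧ IsPCOpen G col (f i)) ∧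
      ∀ i j, i ≠ j → ∀ v : V, v ∈ (f i).support → v ∈ (f j).support → v = x ∨ v = y := by
  classical
  obtain ⟨L, hL, hLdisj⟩ := Menger.hasDisjointABWalks_of_forall_le_card (k := s)
    fun S hS => (hcut (S \ {x, y}) (by simp) (by simp) fun p hpath hpc =>
      exists_mem_support_of_separates hsym hinj hord hr hnadj hS hpath hpc).trans
      (card_le_card sdiff_subset)
  choose f hpath hpc hf using fun i => exists_pcPath_of_isABWalk hsym hinj hord hr hnadj (hL i)
  refine ⟨f, fun i j hij => ?_, fun i => ⟨hpath i, hpc i⟩, fun i j hij v hvi hvj => ?_⟩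
  · by_contra hne
    have hLij : L i = L j := by simpa [hf] using congrArg Walk.support hij
    obtain ⟨a, ha⟩ := List.exists_mem_of_ne_nil _ (hL i).ne_nil
    exact hLdisj hne ha (hLij ▸ ha)
  · rw [hf] at hvi hvj
    simp only [List.mem_cons, List.mem_append, List.not_mem_nil, or_false] at hvi hvj
    rcases hvi with h | h | h <;> rcases hvj with h' | h' | h'
    all_goals first | exact .inl ‹_› | exact .inr ‹_› | exact (hLdisj hij h h').elim

end PCPaths

theorem pc_menger_type4_general {V : Type*} [Fintype V] {c : ℕ}
    (G : SimpleGraph V) (col : V → V → Fin c) (hsym : ∀ u v, col u v = col v u)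
    (hacyc : PCAcyclic4 G col) (x y : V) (hxy : x ≠ y) (s t : ℕ)
    (hs : IsLeast {n : ℕ | ∃ S : Finset V, S.card = n ∧ x ∉ S ∧ y ∉ S ∧
        ∀ p : G.Walk x y, p.IsPath → IsPCOpen G col p → ∃ v ∈ S, v ∈ p.support} s)
    (ht : IsGreatest {k : ℕ | ∃ f : Fin k → G.Walk x y, Function.Injective f ∧
        (∀ i, (f i).IsPath ∧ IsPCOpen G col (f i)) ∧
        ∀ i j, i ≠ j → ∀ v : V,
          v ∈ (f i).support → v ∈ (f j).support → v = x ∨ v = y} t) :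
    s = t := by
  obtain ⟨r, hinj, hord, hr⟩ := hacyc.exists_ordering4_lt hxy
  obtain ⟨S, rfl, hxS, hyS, hScut⟩ := hs.1
  have hnadj : ¬ G.Adj x y := fun hadj => by
    obtain ⟨v, hvS, hv⟩ := hScut (.cons hadj .nil) (by simp [hxy])
      (List.isChain_singleton (col x y))
    simp only [Walk.support_cons, Walk.support_nil, List.mem_cons, List.not_mem_nil,
      or_false] at hv
    rcases hv with rfl | rfl
    exacts [hxS hvS, hyS hvS]
  obtain ⟨f, -, hf, hfdisj⟩ := ht.1
  refine le_antisymm (ht.2 (exists_internallyDisjoint_pcPaths hsym hinj hord hr hnadj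
    fun S hx hy hcut => hs.2 ⟨S, rfl, hx, hy, hcut⟩)) ?_
  exact Walk.card_le_of_internallyDisjoint f hfdisj hxS hyS fun i => hScut _ (hf i).1 (hf i).2

/-- Menger's theorem for PC paths on graphs PC acyclic of type 4.
The minimum size of a set `S ⊆ V(G) \ {x,y}` whose removal eliminates all PC paths
between `x` and `y` equals the maximum number of pairwise internally vertex-disjoint
PC paths between `x` and `y`. -/
theorem pc_menger_type4 {V : Type*} [Fintype V] [DecidableEq V] {c : ℕ}
    (G : SimpleGraph V) (col : V → V → Fin c) (hsym : ∀ u v, col u v = col v u)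
    (hacyc : PCAcyclic4 G col) (x y : V) (hxy : x ≠ y) (s t : ℕ)
    (hs : IsLeast {n : ℕ | ∃ S : Finset V, S.card = n ∧ x ∉ S ∧ y ∉ S ∧
        ∀ p : G.Walk x y, p.IsPath → IsPCOpen G col p → ∃ v ∈ S, v ∈ p.support} s)
    (ht : IsGreatest {k : ℕ | ∃ f : Fin k → G.Walk x y, Function.Injective f ∧
        (∀ i, (f i).IsPath ∧ IsPCOpen G col (f i)) ∧
        ∀ i j, i ≠ j → ∀ v : V,
          v ∈ (f i).support → v ∈ (f j).support → v = x ∨ v = y} t) :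
    s = t :=
  pc_menger_type4_general G col hsym hacyc x y hxy s t hs ht
end

section
/- Let H be a graph and let G be the 2-edge-colored graph with V(G) = V(H) ∪ {x,y} (x, y new vertices), in which every edge of H is colored red and, for every u ∈ V(H), the edges xu and uy are present and colored blue. Then G is PC acyclic of type 3, and for every S ⊆ V(H), S is a vertex cover of H if and only if G − S has no PC path between x and y. -/
open SimpleGraph

variable {V : Type*} {c : ℕ}

/-- The 2-edge-colored graph built from a graph `H` for the vertex-cover reduction:
vertices are `V(H) ⊕ {x, y}` (with `x = Sum.inr 0`, `y = Sum.inr 1`), the edges of `H`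
are kept, and every vertex of `H` is joined to both `x` and `y`. -/
def VCGraph {W : Type*} (H : SimpleGraph W) : SimpleGraph (W ⊕ Fin 2) :=
  SimpleGraph.fromRel fun a b =>
    (∃ u v : W, a = Sum.inl u ∧ b = Sum.inl v ∧ H.Adj u v) ∨
    (∃ (u : W) (i : Fin 2), a = Sum.inl u ∧ b = Sum.inr i)

/-- Edges of `H` are red (color `0`); edges incident to `x` or `y` are blue (color `1`). -/
def col17 {W : Type*} : (W ⊕ Fin 2) → (W ⊕ Fin 2) → Fin 2 := fun a b =>
  match a, b with
  | Sum.inl _, Sum.inl _ => 0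
  | _, _ => 1

open SimpleGraph

lemma IsPCOpen.ne_of_cons_cons {V : Type*} {c : ℕ} {G : SimpleGraph V} {col : V → V → Fin c}
    {a b d e : V} {h₁ : G.Adj a b} {h₂ : G.Adj b d} {q : G.Walk d e}
    (hp : IsPCOpen G col (.cons h₁ (.cons h₂ q))) : col a b ≠ col b d :=
  (List.isChain_cons_cons.mp hp).1

namespace VCGraph

variable {W : Type*} {H : SimpleGraph W}

@[simp]
lemma adj_inl_inl {u v : W} : (VCGraph H).Adj (Sum.inl u) (Sum.inl v) ↔ H.Adj u v := by
  simp only [VCGraph, fromRel_adj, ne_eq, Sum.inl.injEq, reduceCtorEq, and_false, exists_false,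
    or_false, exists_and_left, exists_eq_left']
  exact ⟨fun ⟨_, h⟩ => h.elim id (·.symm), fun h => ⟨h.ne, .inl h⟩⟩

@[simp]
lemma adj_inl_inr (u : W) (i : Fin 2) : (VCGraph H).Adj (Sum.inl u) (Sum.inr i) :=
  (fromRel_adj _ _ _).mpr ⟨by simp, .inl (.inr ⟨u, i, rfl, rfl⟩)⟩

@[simp]
lemma not_adj_inr_inr (i j : Fin 2) : ¬ (VCGraph H).Adj (Sum.inr i) (Sum.inr j) := by
  simp [VCGraph]

/-- `x`, `y` only have blue edges, and the later neighbours of a vertex of `H` lie in `H`,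
hence are joined to it by red edges. -/
lemma ordering3 {r : W ⊕ Fin 2 → ℕ} (hr : ∀ u i, r (Sum.inr i) < r (Sum.inl u)) :
    Ordering3 (VCGraph H) col17 r := by
  rintro (u | i) (v | j) (w | k) - - hv hw
  all_goals first
    | rfl
    | exact absurd hv (hr u j).not_gt
    | exact absurd hw (hr u k).not_gt

lemma pcAcyclic3 [Countable W] : PCAcyclic3 (VCGraph H) col17 := by
  obtain ⟨f, hf⟩ := Countable.exists_injective_nat W
  refine ⟨Sum.elim (fun u => f u + 2) Fin.val, ?_, ordering3 fun u i => ?_⟩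
  · refine ((add_left_injective 2).comp hf).sumElim Fin.val_injective fun u i => ?_
    have := i.is_lt
    simp only [Function.comp_apply]
    omega
  · have := i.is_lt
    simp only [Sum.elim_inl, Sum.elim_inr]
    omega

/-- Leaving `x` or `y` takes a blue edge into `H`, and the next edge must be red, i.e. an edge
of `H`. -/
lemma exists_adj_of_isPCOpen {i j : Fin 2} (hij : i ≠ j) {p : (VCGraph H).Walk (.inr i) (.inr j)}
    (hp : IsPCOpen (VCGraph H) col17 p) :
    ∃ u v, H.Adj u v ∧ Sum.inl u ∈ p.support ∧ Sum.inl v ∈ p.support := by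
  match p, hp with
  | .nil, _ => exact absurd rfl hij
  | .cons (v := .inr _) h _, _ => exact absurd h (not_adj_inr_inr _ _)
  | .cons (v := .inl u) _ (.cons (v := .inl v) h q), _ =>
    exact ⟨u, v, adj_inl_inl.mp h, by simp, by simp⟩
  | .cons (v := .inl _) _ (.cons (v := .inr _) _ _), hp => exact absurd rfl hp.ne_of_cons_cons

def throughEdge {u v : W} (h : H.Adj u v) : (VCGraph H).Walk (.inr 0) (.inr 1) :=
  .cons (adj_inl_inr u 0).symm (.cons (adj_inl_inl.mpr h) (.cons (adj_inl_inr v 1) .nil))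

lemma support_throughEdge {u v : W} (h : H.Adj u v) :
    (throughEdge h).support = [.inr 0, .inl u, .inl v, .inr 1] := rfl

lemma isPath_throughEdge {u v : W} (h : H.Adj u v) : (throughEdge h).IsPath := by
  simp [Walk.isPath_def, support_throughEdge, h.ne]

lemma isPCOpen_throughEdge {u v : W} (h : H.Adj u v) :
    IsPCOpen (VCGraph H) col17 (throughEdge h) := by
  show List.IsChain (· ≠ ·) [(1 : Fin 2), 0, 1]
  decide

end VCGraph

/-- The graph `VCGraph H` is PC acyclic of type 3, and a set
`S ⊆ V(H)` is a vertex cover of `H` iff `VCGraph H − S` has no PC path between `x`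
and `y`. -/
theorem vertex_cover_reduction {W : Type*} [Fintype W] (H : SimpleGraph W) :
    PCAcyclic3 (VCGraph H) col17 ∧
      ∀ S : Set W,
        ((∀ u v : W, H.Adj u v → u ∈ S ∨ v ∈ S) ↔
          ¬ ∃ p : (VCGraph H).Walk (Sum.inr 0) (Sum.inr 1),
            p.IsPath ∧ IsPCOpen (VCGraph H) col17 p ∧
              ∀ u ∈ S, Sum.inl u ∉ p.support) := by
  refine ⟨VCGraph.pcAcyclic3, fun S => ⟨?_, fun hno u v huv => ?_⟩⟩
  · rintro hS ⟨p, -, hpc, havoid⟩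
    obtain ⟨u, v, huv, hu, hv⟩ := VCGraph.exists_adj_of_isPCOpen (by decide) hpc
    rcases hS u v huv with h | h
    · exact havoid u h hu
    · exact havoid v h hv
  · by_contra! ⟨hu, hv⟩
    refine hno ⟨_, VCGraph.isPath_throughEdge huv, VCGraph.isPCOpen_throughEdge huv, ?_⟩
    simpa [VCGraph.support_throughEdge] using
      fun w hw => ⟨ne_of_mem_of_not_mem hw hu, ne_of_mem_of_not_mem hw hv⟩
end
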